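/- arXiv:2605.10775 — 4 statements merged into one kernel-verified Lean document; each statement's English description precedes it below -/
import Mathlib

section
/- Assume (A2). A measure μ ∈ P(Ω) with ∫_Ω ‖Φ(w,θ)‖_F dμ(w,θ) < ∞ is a global minimizer of F over P(Ω) if and only if g_μ is identically zero on ℝ^{d_θ} (equivalently, the first variation F'(μ) is identically zero on Ω). -/
/-!
Let `m = ∫ Φ dμ`. Since `R` is convex and differentiable, `m` minimizes `R` over the convex set
of means `∫ Φ dν` of probability measures if and only if the variational inequality
`⟪∇R(m), y - m⟫ ≥ 0` holds for every such mean `y`. Dirac masses show this amounts to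
`⟪∇R(m), m⟫ ≤ ⟪∇R(m), φ(θ) w⟫ = ⟪g_μ(θ), w⟫` for all `(w, θ)`, and a linear functional of `w`
that is bounded below vanishes.
-/

open MeasureTheory Filter Set
open scoped RealInnerProductSpace ENNReal NNReal Topology

noncomputable section

variable {Ew Eθ : Type*}
  [NormedAddCommGroup Ew] [InnerProductSpace ℝ Ew] [CompleteSpace Ew]
  [NormedAddCommGroup Eθ] [InnerProductSpace ℝ Eθ] [CompleteSpace Eθ]
  [MeasurableSpace Ew] [MeasurableSpace Eθ]
  {F : Type*} [NormedAddCommGroup F] [InnerProductSpace ℝ F] [CompleteSpace F]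

/-- `g_μ(θ) = φ(θ)* R'(∫ Φ dμ)` where `Φ(w,θ) = φ(θ)w`, so `F'(μ)(w,θ) = ⟨g_μ(θ), w⟩`. -/
def gmu (R : F → ℝ) (φ : Eθ → (Ew →L[ℝ] F)) (μ : Measure (Ew × Eθ)) (θ : Eθ) : Ew :=
  ContinuousLinearMap.adjoint (φ θ) (gradient R (∫ u : Ew × Eθ, φ u.2 u.1 ∂μ))

open Classical in
/-- The objective `F(μ) = R(∫ Φ dμ)` (`= +∞` when `Φ` is not `μ`-integrable). -/
def Fval (R : F → ℝ) (φ : Eθ → (Ew →L[ℝ] F)) (μ : Measure (Ew × Eθ)) : ℝ≥0∞ :=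
  if Integrable (fun u : Ew × Eθ => φ u.2 u.1) μ then
    ENNReal.ofReal (R (∫ u : Ew × Eθ, φ u.2 u.1 ∂μ))
  else ⊤

end

section Convex

variable {F : Type*} [NormedAddCommGroup F] [InnerProductSpace ℝ F] [CompleteSpace F]
  {R : F → ℝ} {g x : F}

theorem ConvexOn.add_inner_gradient_le (hR : ConvexOn ℝ univ R) (hg : HasGradientAt R g x)
    (y : F) : R x + ⟪g, y - x⟫ ≤ R y := by
  set f : ℝ → ℝ := fun t => R (AffineMap.lineMap x y t)
  have hf : ConvexOn ℝ univ f := hR.comp_affineMap (AffineMap.lineMap x y)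
  have hline : HasDerivAt (fun t : ℝ => AffineMap.lineMap x y t) (y - x) 0 :=
    AffineMap.hasDerivAt_lineMap
  have hR' : HasFDerivAt R (InnerProductSpace.toDual ℝ F g) (AffineMap.lineMap x y (0 : ℝ)) := by
    simpa using hg.hasFDerivAt
  have hf' : HasDerivAt f ⟪g, y - x⟫ 0 := hR'.comp_hasDerivAt 0 hline
  have := hf.le_slope_of_hasDerivAt (mem_univ 0) (mem_univ 1) zero_lt_one hf'
  rw [slope_def_field] at this
  simp only [f, AffineMap.lineMap_apply_zero, AffineMap.lineMap_apply_one, sub_zero,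
    div_one] at this
  linarith

theorem ConvexOn.isMinOn_iff_inner_gradient_nonneg (hR : ConvexOn ℝ univ R) {S : Set F}
    (hS : Convex ℝ S) (hx : x ∈ S) (hg : HasGradientAt R g x) :
    IsMinOn R S x ↔ ∀ y ∈ S, 0 ≤ ⟪g, y - x⟫ := by
  refine ⟨fun hmin y hy => ?_, fun h => isMinOn_iff.2 fun y hy => ?_⟩
  · simpa using hmin.localize.hasFDerivWithinAt_nonneg hg.hasFDerivAt.hasFDerivWithinAt
      (sub_mem_posTangentConeAt_of_segment_subset (hS.segment_subset hx hy))
  · linarith [hR.add_inner_gradient_le hg y, h y hy]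

end Convex

theorem eq_zero_of_forall_le_inner {E : Type*} [NormedAddCommGroup E] [InnerProductSpace ℝ E]
    {a : E} {c : ℝ} (h : ∀ w, c ≤ ⟪a, w⟫) : a = 0 := by
  by_contra ha
  have hpos : 0 < ‖a‖ ^ 2 := pow_pos (norm_pos_iff.2 ha) 2
  have := h (((c - 1) / ‖a‖ ^ 2) • a)
  rw [real_inner_smul_right, real_inner_self_eq_norm_sq, div_mul_cancel₀ _ hpos.ne'] at this
  linarith

section MeanSet

variable {Ω : Type*} [MeasurableSpace Ω] {F : Type*} [NormedAddCommGroup F] [InnerProductSpace ℝ F]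

def meanSet (Φ : Ω → F) : Set F :=
  {y | ∃ ν : Measure Ω, IsProbabilityMeasure ν ∧ Integrable Φ ν ∧ ∫ u, Φ u ∂ν = y}

theorem integral_mem_meanSet {Φ : Ω → F} {ν : Measure Ω} [IsProbabilityMeasure ν]
    (hΦ : Integrable Φ ν) : ∫ u, Φ u ∂ν ∈ meanSet Φ :=
  ⟨ν, inferInstance, hΦ, rfl⟩

theorem apply_mem_meanSet [CompleteSpace F] [MeasurableSingletonClass Ω] (Φ : Ω → F) (u : Ω) :
    Φ u ∈ meanSet Φ := by
  simpa using integral_mem_meanSet (Φ := Φ) (integrable_dirac (a := u) enorm_lt_top)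

theorem convex_meanSet (Φ : Ω → F) : Convex ℝ (meanSet Φ) := by
  rintro _ ⟨ν₁, _, h₁, rfl⟩ _ ⟨ν₂, _, h₂, rfl⟩ a b ha hb hab
  have i₁ : Integrable Φ (ENNReal.ofReal a • ν₁) := h₁.smul_measure ENNReal.ofReal_ne_top
  have i₂ : Integrable Φ (ENNReal.ofReal b • ν₂) := h₂.smul_measure ENNReal.ofReal_ne_top
  refine ⟨ENNReal.ofReal a • ν₁ + ENNReal.ofReal b • ν₂, ⟨?_⟩,
    integrable_add_measure.2 ⟨i₁, i₂⟩, ?_⟩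
  · simp [← ENNReal.ofReal_add ha hb, hab]
  · rw [integral_add_measure i₁ i₂, integral_smul_measure, integral_smul_measure,
      ENNReal.toReal_ofReal ha, ENNReal.toReal_ofReal hb]

theorem inner_eq_zero_of_mem_meanSet [CompleteSpace F] {Φ : Ω → F} {g : F}
    (h : ∀ u, ⟪g, Φ u⟫ = 0) {y : F} (hy : y ∈ meanSet Φ) : ⟪g, y⟫ = 0 := by
  obtain ⟨ν, _, hΦ, rfl⟩ := hy
  simp [← integral_inner hΦ, h]

end MeanSet

theorem forall_Fval_le_iff_isMinOn_meanSet {Ew Eθ : Type*}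
    [NormedAddCommGroup Ew] [InnerProductSpace ℝ Ew] [CompleteSpace Ew]
    [NormedAddCommGroup Eθ] [InnerProductSpace ℝ Eθ] [CompleteSpace Eθ]
    [MeasurableSpace Ew] [MeasurableSpace Eθ]
    {F : Type*} [NormedAddCommGroup F] [InnerProductSpace ℝ F] [CompleteSpace F]
    {R : F → ℝ} (hR0 : ∀ h, 0 ≤ R h) {φ : Eθ → (Ew →L[ℝ] F)} {μ : Measure (Ew × Eθ)}
    (hdom : Integrable (fun u : Ew × Eθ => φ u.2 u.1) μ) :
    (∀ ν : Measure (Ew × Eθ), IsProbabilityMeasure ν → Fval R φ μ ≤ Fval R φ ν) ↔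
      IsMinOn R (meanSet fun u : Ew × Eθ => φ u.2 u.1) (∫ u, φ u.2 u.1 ∂μ) := by
  constructor
  · rintro h _ ⟨ν, hν, hint, rfl⟩
    have := h ν hν
    rwa [Fval, Fval, if_pos hdom, if_pos hint, ENNReal.ofReal_le_ofReal_iff (hR0 _)] at this
  · intro h ν _
    rw [Fval, Fval, if_pos hdom]
    split_ifs with hint
    · exact ENNReal.ofReal_le_ofReal (h (integral_mem_meanSet hint))
    · exact le_top

theorem stmt_3_general {dw dθ : ℕ} {F : Type*} [NormedAddCommGroup F] [InnerProductSpace ℝ F]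
    [CompleteSpace F]
    (R : F → ℝ) (hR0 : ∀ h, 0 ≤ R h) (hRconv : ConvexOn ℝ Set.univ R)
    (hRdiff : Differentiable ℝ R)
    (φ : EuclideanSpace ℝ (Fin dθ) → (EuclideanSpace ℝ (Fin dw) →L[ℝ] F))
    (μ : Measure (EuclideanSpace ℝ (Fin dw) × EuclideanSpace ℝ (Fin dθ)))
    [IsProbabilityMeasure μ]
    (hdom : Integrable (fun u : EuclideanSpace ℝ (Fin dw) × EuclideanSpace ℝ (Fin dθ) =>
      φ u.2 u.1) μ) :
    (∀ ν : Measure (EuclideanSpace ℝ (Fin dw) × EuclideanSpace ℝ (Fin dθ)),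
      IsProbabilityMeasure ν → Fval R φ μ ≤ Fval R φ ν) ↔ ∀ θ, gmu R φ μ θ = 0 := by
  set m := ∫ u, φ u.2 u.1 ∂μ
  have hinner : ∀ w θ, ⟪gradient R m, φ θ w⟫ = ⟪gmu R φ μ θ, w⟫ := fun w θ => by
    rw [gmu, ContinuousLinearMap.adjoint_inner_left]
  rw [forall_Fval_le_iff_isMinOn_meanSet hR0 hdom,
    hRconv.isMinOn_iff_inner_gradient_nonneg (convex_meanSet _) (integral_mem_meanSet hdom)
      (hRdiff m).hasGradientAt]
  constructor
  · intro h θ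
    refine eq_zero_of_forall_le_inner (c := ⟪gradient R m, m⟫) fun w => ?_
    have := h _ (apply_mem_meanSet _ (w, θ))
    rw [inner_sub_right, hinner] at this
    linarith
  · intro h y hy
    have hΦ : ∀ u : EuclideanSpace ℝ (Fin dw) × EuclideanSpace ℝ (Fin dθ),
        ⟪gradient R m, φ u.2 u.1⟫ = 0 := fun u => by rw [hinner, h, inner_zero_left]
    rw [inner_sub_right, inner_eq_zero_of_mem_meanSet hΦ hy,
      inner_eq_zero_of_mem_meanSet hΦ (integral_mem_meanSet hdom), sub_zero]

/-- Under Assumption (A2), a probability measure `μ` in the domain of `F`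
is a global minimizer of `F` over `P(Ω)` if and only if `g_μ ≡ 0` (equivalently, the first
variation `F'(μ)(w,θ) = ⟨g_μ(θ),w⟩` vanishes identically on `Ω`). -/
theorem stmt_3 {dw dθ : ℕ} {F : Type*} [NormedAddCommGroup F] [InnerProductSpace ℝ F]
    [CompleteSpace F] [TopologicalSpace.SeparableSpace F]
    (R : F → ℝ) (hR0 : ∀ h, 0 ≤ R h) (hRconv : ConvexOn ℝ Set.univ R)
    (hRdiff : Differentiable ℝ R)
    (hRlip : ∀ s : Set F, Bornology.IsBounded s →
      ∃ L : ℝ≥0, LipschitzOnWith L (gradient R) s)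
    (hRsub : ∀ c : ℝ, ∃ M, ∀ h, R h ≤ c → ‖gradient R h‖ ≤ M)
    (φ : EuclideanSpace ℝ (Fin dθ) → (EuclideanSpace ℝ (Fin dw) →L[ℝ] F))
    (hφb : ∃ C, ∀ θ, ‖φ θ‖ ≤ C) (hφd : Differentiable ℝ φ)
    (hφdb : ∃ C, ∀ θ, ‖fderiv ℝ φ θ‖ ≤ C)
    (hφdl : ∃ L : ℝ≥0, LipschitzWith L (fderiv ℝ φ))
    (μ : Measure (EuclideanSpace ℝ (Fin dw) × EuclideanSpace ℝ (Fin dθ)))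
    [IsProbabilityMeasure μ]
    (hdom : Integrable (fun u : EuclideanSpace ℝ (Fin dw) × EuclideanSpace ℝ (Fin dθ) =>
      φ u.2 u.1) μ) :
    (∀ ν : Measure (EuclideanSpace ℝ (Fin dw) × EuclideanSpace ℝ (Fin dθ)),
      IsProbabilityMeasure ν → Fval R φ μ ≤ Fval R φ ν) ↔ ∀ θ, gmu R φ μ θ = 0 :=
  stmt_3_general R hR0 hRconv hRdiff φ μ hdom
end

section
/- Let σ: ℝ → ℝ be differentiable with bounded and Lipschitz derivative, let ρ_x be a probability measure on ℝ^{d_in} with finite moments up to order 4, and define Φ: ℝ^{d_out} × ℝ^{d_in} → L²(ρ_x; ℝ^{d_out}) by Φ(w,θ) = (x ↦ σ(⟨θ,x⟩) w). Then Φ is differentiable and satisfies: (i) there is C > 0 with ‖dΦ(w,θ)‖ ≤ C(1+|(w,θ)|) for all (w,θ); (ii) there is C' > 0 such that for every r > 0 and (w₁,θ₁),(w₂,θ₂) in the ball of radius r, ‖dΦ(w₁,θ₁) − dΦ(w₂,θ₂)‖ ≤ C'(1+r)|(w₁,θ₁)−(w₂,θ₂)|. If in addition σ is bounded, then the map φ: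 θ ↦ (w ↦ σ(⟨θ,·⟩)w) ∈ L(ℝ^{d_out}; L²(ρ_x; ℝ^{d_out})) is bounded and differentiable with bounded Lipschitz differential. -/
/-!
Write `Φ (w, θ) = B w (G θ)` with `G θ = σ (⟪θ, ·⟫) ∈ L²(ρ_x)` and the bounded bilinear map
`B w g = g • w`. By the mean value inequality, `G` is Lipschitz with constant
`‖σ'‖_∞ ‖|x|‖_{L²}`, and it is differentiable with `dG θ η = ⟪η, σ'(⟪θ, ·⟫) x⟫`: the pointwise
Taylor remainder is at most `L ⟪h, x⟫² ≤ L |h|² |x|²`, which the fourth moment turns into an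
`O(|h|²)` bound in `L²`. For the same reason `θ ↦ dG θ` is Lipschitz. The product rule gives
`dΦ (w, θ) (v, η) = B w (dG θ η) + B v (G θ)`, from which linear growth and the `C'(1 + r)`
bound on balls follow; likewise `φ = B.flip ∘ G`.
-/

open MeasureTheory Filter Set
open scoped RealInnerProductSpace ENNReal NNReal Topology

section ApplyComp

open ContinuousLinearMap

variable {𝕜 X Y Z P W : Type*} [NontriviallyNormedField 𝕜]
  [NormedAddCommGroup X] [NormedSpace 𝕜 X] [NormedAddCommGroup Y] [NormedSpace 𝕜 Y]
  [NormedAddCommGroup Z] [NormedSpace 𝕜 Z] [NormedAddCommGroup P] [NormedSpace 𝕜 P]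
  [NormedAddCommGroup W] [NormedSpace 𝕜 W] (B : Y →L[𝕜] X →L[𝕜] Z) {G : P → X} {G' : P → P →L[𝕜] X}

theorem hasFDerivAt_apply_comp_snd {u : Y × P} (hG : HasFDerivAt G (G' u.2) u.2) :
    HasFDerivAt (fun v : Y × P => B v.1 (G v.2))
      ((B u.1).comp ((G' u.2).comp (snd 𝕜 Y P)) + (B.comp (fst 𝕜 Y P)).flip (G u.2)) u :=
  (B.hasFDerivAt.comp u hasFDerivAt_fst).clm_apply (hG.comp u hasFDerivAt_snd)

theorem fderiv_apply_comp_snd_apply (hG : ∀ θ, HasFDerivAt G (G' θ) θ) (u q : Y × P) :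
    fderiv 𝕜 (fun v : Y × P => B v.1 (G v.2)) u q = B u.1 (G' u.2 q.2) + B q.1 (G u.2) := by
  rw [(hasFDerivAt_apply_comp_snd B (hG u.2)).fderiv]
  rfl

theorem norm_fderiv_apply_comp_snd_le (hG : ∀ θ, HasFDerivAt G (G' θ) θ) (u : Y × P) :
    ‖fderiv 𝕜 (fun v : Y × P => B v.1 (G v.2)) u‖ ≤ ‖B‖ * (‖u.1‖ * ‖G' u.2‖ + ‖G u.2‖) := by
  refine opNorm_le_bound _ (by positivity) fun q => ?_
  rw [fderiv_apply_comp_snd_apply B hG]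
  have hq₁ : ‖q.1‖ ≤ ‖q‖ := norm_fst_le q
  have hq₂ : ‖q.2‖ ≤ ‖q‖ := norm_snd_le q
  calc ‖B u.1 (G' u.2 q.2) + B q.1 (G u.2)‖
      ≤ ‖B‖ * ‖u.1‖ * (‖G' u.2‖ * ‖q.2‖) + ‖B‖ * ‖q.1‖ * ‖G u.2‖ :=
        norm_add_le_of_le ((B.le_opNorm₂ _ _).trans (by gcongr; exact le_opNorm _ _))
          (B.le_opNorm₂ _ _)
    _ ≤ ‖B‖ * ‖u.1‖ * (‖G' u.2‖ * ‖q‖) + ‖B‖ * ‖q‖ * ‖G u.2‖ := by gcongr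
    _ = ‖B‖ * (‖u.1‖ * ‖G' u.2‖ + ‖G u.2‖) * ‖q‖ := by ring

theorem norm_fderiv_apply_comp_snd_sub_le (hG : ∀ θ, HasFDerivAt G (G' θ) θ) (u₁ u₂ : Y × P) :
    ‖fderiv 𝕜 (fun v : Y × P => B v.1 (G v.2)) u₁ - fderiv 𝕜 (fun v : Y × P => B v.1 (G v.2)) u₂‖
      ≤ ‖B‖ * (‖u₁.1 - u₂.1‖ * ‖G' u₁.2‖ + ‖u₂.1‖ * ‖G' u₁.2 - G' u₂.2‖
        + ‖G u₁.2 - G u₂.2‖) := by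
  refine opNorm_le_bound _ (by positivity) fun q => ?_
  have hsplit : (fderiv 𝕜 (fun v : Y × P => B v.1 (G v.2)) u₁
      - fderiv 𝕜 (fun v : Y × P => B v.1 (G v.2)) u₂) q
      = B (u₁.1 - u₂.1) (G' u₁.2 q.2) + B u₂.1 ((G' u₁.2 - G' u₂.2) q.2)
        + B q.1 (G u₁.2 - G u₂.2) := by
    simp only [sub_apply, fderiv_apply_comp_snd_apply B hG, map_sub]
    abel
  rw [hsplit]
  have hq₁ : ‖q.1‖ ≤ ‖q‖ := norm_fst_le q
  have hq₂ : ‖q.2‖ ≤ ‖q‖ := norm_snd_le q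
  calc _ ≤ ‖B‖ * ‖u₁.1 - u₂.1‖ * (‖G' u₁.2‖ * ‖q.2‖)
        + ‖B‖ * ‖u₂.1‖ * (‖G' u₁.2 - G' u₂.2‖ * ‖q.2‖) + ‖B‖ * ‖q.1‖ * ‖G u₁.2 - G u₂.2‖ := by
        refine norm_add₃_le.trans (add_le_add_three ?_ ?_ (B.le_opNorm₂ _ _)) <;>
          exact (B.le_opNorm₂ _ _).trans (by gcongr; exact le_opNorm _ _)
    _ ≤ ‖B‖ * ‖u₁.1 - u₂.1‖ * (‖G' u₁.2‖ * ‖q‖)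
        + ‖B‖ * ‖u₂.1‖ * (‖G' u₁.2 - G' u₂.2‖ * ‖q‖) + ‖B‖ * ‖q‖ * ‖G u₁.2 - G u₂.2‖ := by
        gcongr
    _ = _ := by ring

variable {K L : ℝ≥0}

theorem exists_norm_fderiv_apply_comp_snd_le_mul (hG : ∀ θ, HasFDerivAt G (G' θ) θ)
    (hGK : LipschitzWith K G) :
    ∃ C > 0, ∀ u, ‖fderiv 𝕜 (fun v : Y × P => B v.1 (G v.2)) u‖ ≤ C * (1 + ‖u‖) := by
  refine ⟨‖B‖ * (‖G 0‖ + 2 * K) + 1, by positivity, fun u => ?_⟩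
  have hG'u : ‖G' u.2‖ ≤ K := (hG u.2).le_of_lipschitz hGK
  have hu₁ : ‖u.1‖ ≤ ‖u‖ := norm_fst_le u
  have hGu : ‖G u.2‖ ≤ ‖G 0‖ + K * ‖u‖ :=
    calc ‖G u.2‖ ≤ ‖G 0‖ + ‖G u.2 - G 0‖ := norm_le_norm_add_norm_sub' _ _
      _ ≤ ‖G 0‖ + K * ‖u‖ := by
          grw [hGK.norm_sub_le, sub_zero, norm_snd_le u]
  calc _ ≤ ‖B‖ * (‖u.1‖ * ‖G' u.2‖ + ‖G u.2‖) := norm_fderiv_apply_comp_snd_le B hG u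
    _ ≤ ‖B‖ * (‖u‖ * K + (‖G 0‖ + K * ‖u‖)) := by gcongr
    _ ≤ (‖B‖ * (‖G 0‖ + 2 * K) + 1) * (1 + ‖u‖) := by
        nlinarith [norm_nonneg B, norm_nonneg u, norm_nonneg (G 0), K.coe_nonneg,
          mul_nonneg (mul_nonneg (norm_nonneg B) (norm_nonneg (G 0))) (norm_nonneg u)]

theorem exists_norm_fderiv_apply_comp_snd_sub_le_mul (hG : ∀ θ, HasFDerivAt G (G' θ) θ)
    (hGK : LipschitzWith K G) (hG'L : LipschitzWith L G') :
    ∃ C > 0, ∀ r > 0, ∀ u₁ u₂ : Y × P, ‖u₁‖ ≤ r → ‖u₂‖ ≤ r →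
      ‖fderiv 𝕜 (fun v : Y × P => B v.1 (G v.2)) u₁ - fderiv 𝕜 (fun v : Y × P => B v.1 (G v.2)) u₂‖
        ≤ C * (1 + r) * ‖u₁ - u₂‖ := by
  refine ⟨‖B‖ * (2 * K + L) + 1, by positivity, fun r hr u₁ u₂ _ hu₂ => ?_⟩
  have hd₁ : ‖u₁.1 - u₂.1‖ ≤ ‖u₁ - u₂‖ := norm_fst_le (u₁ - u₂)
  have hd₂ : ‖u₁.2 - u₂.2‖ ≤ ‖u₁ - u₂‖ := norm_snd_le (u₁ - u₂)
  have hu₂₁ : ‖u₂.1‖ ≤ r := (norm_fst_le u₂).trans hu₂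
  have hG'u : ‖G' u₁.2‖ ≤ K := (hG u₁.2).le_of_lipschitz hGK
  calc _ ≤ ‖B‖ * (‖u₁.1 - u₂.1‖ * ‖G' u₁.2‖ + ‖u₂.1‖ * ‖G' u₁.2 - G' u₂.2‖
        + ‖G u₁.2 - G u₂.2‖) := norm_fderiv_apply_comp_snd_sub_le B hG u₁ u₂
    _ ≤ ‖B‖ * (‖u₁ - u₂‖ * K + r * (L * ‖u₁ - u₂‖) + K * ‖u₁ - u₂‖) := by
        gcongr
        · exact (hG'L.norm_sub_le _ _).trans (by gcongr)
        · exact (hGK.norm_sub_le _ _).trans (by gcongr)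
    _ ≤ (‖B‖ * (2 * K + L) + 1) * (1 + r) * ‖u₁ - u₂‖ := by
        have hB := norm_nonneg B
        have hd := norm_nonneg (u₁ - u₂)
        nlinarith [mul_nonneg (mul_nonneg hB L.coe_nonneg) hd,
          mul_nonneg (mul_nonneg (mul_nonneg hB K.coe_nonneg) hr.le) hd,
          mul_nonneg (add_nonneg zero_le_one hr.le) hd]

theorem differentiable_and_fderiv_bounded_lipschitz_comp (A : X →L[𝕜] W)
    (hG : ∀ θ, HasFDerivAt G (G' θ) θ) (hGK : LipschitzWith K G) (hG'L : LipschitzWith L G') :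
    Differentiable 𝕜 (fun θ => A (G θ)) ∧ (∃ C, ∀ θ, ‖fderiv 𝕜 (fun θ => A (G θ)) θ‖ ≤ C) ∧
      ∃ L' : ℝ≥0, LipschitzWith L' (fderiv 𝕜 (fun θ => A (G θ))) := by
  have hAG : ∀ θ, HasFDerivAt (fun θ => A (G θ)) (compL 𝕜 P X W A (G' θ)) θ :=
    fun θ => A.hasFDerivAt.comp θ (hG θ)
  have hfderiv : fderiv 𝕜 (fun θ => A (G θ)) = fun θ => compL 𝕜 P X W A (G' θ) :=
    funext fun θ => (hAG θ).fderiv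
  refine ⟨fun θ => (hAG θ).differentiableAt, ⟨‖A‖ * K, fun θ => ?_⟩, ‖compL 𝕜 P X W A‖₊ * L, ?_⟩
  · rw [hfderiv]
    exact (opNorm_comp_le A (G' θ)).trans (by gcongr; exact (hG θ).le_of_lipschitz hGK)
  · rw [hfderiv]
    exact (compL 𝕜 P X W A).lipschitz.comp hG'L

end ApplyComp

section Lp

open ContinuousLinearMap

variable {α : Type*} [MeasurableSpace α] {μ : Measure α} {p : ℝ≥0∞} [Fact (1 ≤ p)]
  {𝕜 F : Type*} [NontriviallyNormedField 𝕜] [NormedAddCommGroup F] [NormedSpace 𝕜 F]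

noncomputable def smulRightLp : F →L[𝕜] Lp 𝕜 p μ →L[𝕜] Lp F p μ :=
  compLpL₂ p μ (lsmul 𝕜 𝕜).flip

theorem smulRightLp_coeFn (w : F) (g : Lp 𝕜 p μ) :
    smulRightLp w g =ᵐ[μ] fun x => g x • w :=
  ((lsmul 𝕜 𝕜).flip w).coeFn_compLp g

variable {E : Type*} [NormedAddCommGroup E] [InnerProductSpace ℝ E]

noncomputable def innerLp : Lp E p μ →L[ℝ] E →L[ℝ] Lp ℝ p μ :=
  (compLpL₂ p μ (innerSL ℝ)).flip

theorem innerLp_coeFn (f : Lp E p μ) (η : E) : innerLp f η =ᵐ[μ] fun x => ⟪η, f x⟫ :=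
  (innerSL ℝ η).coeFn_compLp f

end Lp

theorem abs_sub_sub_deriv_mul_le {f : ℝ → ℝ} {L : ℝ≥0} (hf : Differentiable ℝ f)
    (hf' : LipschitzWith L (deriv f)) (a b : ℝ) :
    |f b - f a - deriv f a * (b - a)| ≤ L * (b - a) ^ 2 := by
  have hg : ∀ t, HasDerivAt (fun t => f t - deriv f a * t) (deriv f t - deriv f a) t :=
    fun t => ((hf t).hasDerivAt.sub ((hasDerivAt_id' t).const_mul (deriv f a))).congr_deriv
      (by rw [mul_one])
  have hbound : ∀ t ∈ Metric.closedBall a |b - a|, ‖deriv f t - deriv f a‖ ≤ L * |b - a| :=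
    fun t ht => (hf'.norm_sub_le t a).trans (by gcongr; exact ht)
  have key := (convex_closedBall a |b - a|).norm_image_sub_le_of_norm_hasDerivWithin_le
    (fun t _ => (hg t).hasDerivWithinAt) hbound (Metric.mem_closedBall_self (abs_nonneg _))
    (show b ∈ Metric.closedBall a |b - a| from (Real.dist_eq b a).le)
  calc |f b - f a - deriv f a * (b - a)|
      = ‖(f b - deriv f a * b) - (f a - deriv f a * a)‖ := by rw [Real.norm_eq_abs]; ring_nf
    _ ≤ L * |b - a| * ‖b - a‖ := key
    _ = L * (b - a) ^ 2 := by rw [Real.norm_eq_abs, mul_assoc, abs_mul_abs_self, sq]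

section Ridge

variable {E : Type*} [NormedAddCommGroup E] [InnerProductSpace ℝ E]

theorem LipschitzWith.norm_sub_comp_inner_le {F : Type*} [SeminormedAddCommGroup F] {f : ℝ → F}
    {K : ℝ≥0} (hf : LipschitzWith K f) (θ₁ θ₂ x : E) :
    ‖f ⟪θ₁, x⟫ - f ⟪θ₂, x⟫‖ ≤ K * ‖θ₁ - θ₂‖ * ‖x‖ :=
  calc _ ≤ K * ‖⟪θ₁, x⟫ - ⟪θ₂, x⟫‖ := hf.norm_sub_le _ _
    _ ≤ K * (‖θ₁ - θ₂‖ * ‖x‖) := by rw [← inner_sub_left]; gcongr; exact norm_inner_le_norm _ _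
    _ = _ := (mul_assoc _ _ _).symm

variable [MeasurableSpace E] [OpensMeasurableSpace E] {μ : Measure E} {p : ℝ≥0∞}

theorem memLp_comp_inner [IsFiniteMeasure μ] {σ : ℝ → ℝ} {K : ℝ≥0} (hσ : LipschitzWith K σ)
    (hm : MemLp (fun x : E => ‖x‖) p μ) (θ : E) : MemLp (fun x => σ ⟪θ, x⟫) p μ := by
  have h : MemLp (fun x => σ ⟪θ, x⟫ - σ ⟪0, x⟫) p μ :=
    hm.of_le_mul (by have := hσ.continuous; fun_prop) <| ae_of_all _ fun x => by
      simpa only [sub_zero, norm_norm] using hσ.norm_sub_comp_inner_le θ 0 x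
  convert h.add (memLp_const (σ 0)) using 1
  ext x
  simp

noncomputable def ridgeLp [IsFiniteMeasure μ] [Fact (1 ≤ p)] (σ : ℝ → ℝ) {K : ℝ≥0}
    (hσ : LipschitzWith K σ) (hm : MemLp (fun x : E => ‖x‖) p μ) (θ : E) : Lp ℝ p μ :=
  (memLp_comp_inner hσ hm θ).toLp _

section RidgeLp

variable [IsFiniteMeasure μ] [Fact (1 ≤ p)] {σ : ℝ → ℝ} {K : ℝ≥0} (hσ : LipschitzWith K σ)
  (hm : MemLp (fun x : E => ‖x‖) p μ)

theorem ridgeLp_coeFn (θ : E) : ridgeLp σ hσ hm θ =ᵐ[μ] fun x => σ ⟪θ, x⟫ :=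
  MemLp.coeFn_toLp _

theorem lipschitzWith_ridgeLp : LipschitzWith (K * ‖hm.toLp _‖₊) (ridgeLp σ hσ hm) := by
  refine LipschitzWith.of_dist_le_mul fun θ₁ θ₂ => ?_
  rw [dist_eq_norm, dist_eq_norm, NNReal.coe_mul, coe_nnnorm, mul_right_comm]
  refine Lp.norm_le_mul_norm_of_ae_le_mul ?_
  filter_upwards [Lp.coeFn_sub (ridgeLp σ hσ hm θ₁) (ridgeLp σ hσ hm θ₂),
    ridgeLp_coeFn hσ hm θ₁, ridgeLp_coeFn hσ hm θ₂, hm.coeFn_toLp] with x hsub h₁ h₂ hx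
  rw [hsub, Pi.sub_apply, h₁, h₂, hx, norm_norm]
  exact hσ.norm_sub_comp_inner_le θ₁ θ₂ x

theorem norm_ridgeLp_le {M : ℝ} (hσM : ∀ t, |σ t| ≤ M) (θ : E) :
    ‖ridgeLp σ hσ hm θ‖ ≤ measureUnivNNReal μ ^ p.toReal⁻¹ * M := by
  refine Lp.norm_le_of_ae_bound ((abs_nonneg _).trans (hσM 0)) ?_
  filter_upwards [ridgeLp_coeFn hσ hm θ] with x hx
  rw [hx]
  exact hσM _

end RidgeLp

variable [SecondCountableTopology E]

theorem memLp_smul_comp_inner {τ : ℝ → ℝ} (hτ : Continuous τ) {M : ℝ} (hτM : ∀ t, ‖τ t‖ ≤ M)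
    (hm : MemLp (fun x : E => ‖x‖) p μ) (θ : E) : MemLp (fun x => τ ⟪θ, x⟫ • x) p μ :=
  hm.of_le_mul (by fun_prop) <| ae_of_all _ fun x => by
    rw [norm_smul, norm_norm]
    gcongr
    exact hτM _

noncomputable def ridgeGradLp [Fact (1 ≤ p)] (τ : ℝ → ℝ) (hτ : Continuous τ) {M : ℝ}
    (hτM : ∀ t, ‖τ t‖ ≤ M) (hm : MemLp (fun x : E => ‖x‖) p μ) (θ : E) : Lp E p μ :=
  (memLp_smul_comp_inner hτ hτM hm θ).toLp _

section RidgeGradLp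

variable [Fact (1 ≤ p)] {τ : ℝ → ℝ} (hτ : Continuous τ) {M : ℝ} (hτM : ∀ t, ‖τ t‖ ≤ M)
  (hm : MemLp (fun x : E => ‖x‖) p μ)

theorem ridgeGradLp_coeFn (θ : E) : ridgeGradLp τ hτ hτM hm θ =ᵐ[μ] fun x => τ ⟪θ, x⟫ • x :=
  MemLp.coeFn_toLp _

theorem lipschitzWith_ridgeGradLp {L : ℝ≥0} (hτL : LipschitzWith L τ)
    (hm₂ : MemLp (fun x : E => ‖x‖ ^ 2) p μ) :
    LipschitzWith (L * ‖hm₂.toLp _‖₊) (ridgeGradLp τ hτ hτM hm) := by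
  refine LipschitzWith.of_dist_le_mul fun θ₁ θ₂ => ?_
  rw [dist_eq_norm, dist_eq_norm, NNReal.coe_mul, coe_nnnorm, mul_right_comm]
  refine Lp.norm_le_mul_norm_of_ae_le_mul ?_
  filter_upwards [Lp.coeFn_sub (ridgeGradLp τ hτ hτM hm θ₁) (ridgeGradLp τ hτ hτM hm θ₂),
    ridgeGradLp_coeFn hτ hτM hm θ₁, ridgeGradLp_coeFn hτ hτM hm θ₂, hm₂.coeFn_toLp]
    with x hsub h₁ h₂ hx
  rw [hsub, Pi.sub_apply, h₁, h₂, hx, ← sub_smul, norm_smul, norm_pow, norm_norm, sq,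
    ← mul_assoc]
  gcongr
  exact hτL.norm_sub_comp_inner_le θ₁ θ₂ x

end RidgeGradLp

theorem hasFDerivAt_ridgeLp [IsFiniteMeasure μ] [Fact (1 ≤ p)] {σ : ℝ → ℝ} {K L : ℝ≥0}
    (hσd : Differentiable ℝ σ) (hσ : LipschitzWith K σ) (hσ' : LipschitzWith L (deriv σ))
    (hm : MemLp (fun x : E => ‖x‖) p μ) (hm₂ : MemLp (fun x : E => ‖x‖ ^ 2) p μ) (θ : E) :
    HasFDerivAt (ridgeLp σ hσ hm) (innerLp (ridgeGradLp (deriv σ) hσ'.continuous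
      (fun _ => norm_deriv_le_of_lipschitz hσ) hm θ)) θ := by
  set g := ridgeGradLp (deriv σ) hσ'.continuous (fun _ => norm_deriv_le_of_lipschitz hσ) hm θ
  have hrem : ∀ h, ‖ridgeLp σ hσ hm (θ + h) - ridgeLp σ hσ hm θ - innerLp g h‖
      ≤ L * ‖hm₂.toLp _‖ * ‖h‖ ^ 2 := fun h => by
    rw [mul_right_comm]
    refine Lp.norm_le_mul_norm_of_ae_le_mul ?_
    filter_upwards [Lp.coeFn_sub (ridgeLp σ hσ hm (θ + h) - ridgeLp σ hσ hm θ) (innerLp g h),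
      Lp.coeFn_sub (ridgeLp σ hσ hm (θ + h)) (ridgeLp σ hσ hm θ),
      ridgeLp_coeFn hσ hm (θ + h), ridgeLp_coeFn hσ hm θ, innerLp_coeFn g h,
      ridgeGradLp_coeFn hσ'.continuous (fun _ => norm_deriv_le_of_lipschitz hσ) hm θ,
      hm₂.coeFn_toLp] with x hsub hsub' h₁ h₂ hg hg' hx
    rw [hsub, Pi.sub_apply, hsub', Pi.sub_apply, h₁, h₂, hg, hg', hx, real_inner_smul_right,
      norm_pow, norm_norm, Real.norm_eq_abs]
    have htaylor := abs_sub_sub_deriv_mul_le hσd hσ' ⟪θ, x⟫ ⟪θ + h, x⟫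
    rw [inner_add_left, add_sub_cancel_left] at htaylor
    calc _ ≤ L * ⟪h, x⟫ ^ 2 := by rwa [inner_add_left]
      _ ≤ L * (‖h‖ * ‖x‖) ^ 2 := by
          rw [← sq_abs]
          gcongr
          exact abs_real_inner_le_norm h x
      _ = L * ‖h‖ ^ 2 * ‖x‖ ^ 2 := by ring
  rw [hasFDerivAt_iff_isLittleO_nhds_zero]
  refine (Asymptotics.IsBigO.of_bound (L * ‖hm₂.toLp _‖) (Eventually.of_forall fun h => ?_))
    |>.trans_isLittleO (Asymptotics.isLittleO_norm_pow_id one_lt_two)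
  rw [norm_pow, norm_norm]
  exact hrem h

end Ridge

/-- For `σ` differentiable with bounded Lipschitz derivative and `ρ_x` with
finite moments up to order 4, the feature map `Φ(w,θ) = σ(⟨θ,·⟩)w ∈ L²(ρ_x;ℝ^{d_out})` is
differentiable, its differential has linear growth and is `C'(1+r)`-Lipschitz on balls of
radius `r`. If moreover `σ` is bounded, the map `φ : θ ↦ (w ↦ σ(⟨θ,·⟩)w)` is bounded and
differentiable with bounded Lipschitz differential. -/
theorem stmt_10 {din dout : ℕ} (σ : ℝ → ℝ) (hσd : Differentiable ℝ σ)
    (hσ'b : ∃ M, ∀ s, |deriv σ s| ≤ M) (hσ'l : ∃ L : ℝ≥0, LipschitzWith L (deriv σ))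
    (ρx : Measure (EuclideanSpace ℝ (Fin din))) [IsProbabilityMeasure ρx]
    (hmom : ∀ i ≤ 4, Integrable (fun x => ‖x‖ ^ i) ρx)
    (Φ : EuclideanSpace ℝ (Fin dout) × EuclideanSpace ℝ (Fin din) →
      Lp (EuclideanSpace ℝ (Fin dout)) 2 ρx)
    (hΦ : ∀ w θ, (Φ (w, θ) : _ → _) =ᵐ[ρx] fun x => σ ⟪θ, x⟫ • w) :
    (Differentiable ℝ Φ ∧
      (∃ C > 0, ∀ u, ‖fderiv ℝ Φ u‖ ≤ C * (1 + ‖u‖)) ∧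
      (∃ C' > 0, ∀ r > 0,
        ∀ u₁ u₂ : EuclideanSpace ℝ (Fin dout) × EuclideanSpace ℝ (Fin din),
          ‖u₁‖ ≤ r → ‖u₂‖ ≤ r →
          ‖fderiv ℝ Φ u₁ - fderiv ℝ Φ u₂‖ ≤ C' * (1 + r) * ‖u₁ - u₂‖)) ∧
    ((∃ M, ∀ s, |σ s| ≤ M) →
      ∀ φm : EuclideanSpace ℝ (Fin din) →
        (EuclideanSpace ℝ (Fin dout) →L[ℝ] Lp (EuclideanSpace ℝ (Fin dout)) 2 ρx),
        (∀ θ w, (φm θ w : _ → _) =ᵐ[ρx] fun x => σ ⟪θ, x⟫ • w) →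
        (∃ C, ∀ θ, ‖φm θ‖ ≤ C) ∧ Differentiable ℝ φm ∧
          (∃ C, ∀ θ, ‖fderiv ℝ φm θ‖ ≤ C) ∧ (∃ L : ℝ≥0, LipschitzWith L (fderiv ℝ φm))) := by
  obtain ⟨M, hM⟩ := hσ'b
  obtain ⟨L, hσ'⟩ := hσ'l
  have hσ : LipschitzWith M.toNNReal σ := lipschitzWith_of_nnnorm_deriv_le hσd fun s => by
    rw [← NNReal.coe_le_coe, coe_nnnorm, Real.coe_toNNReal']
    exact le_max_of_le_left (hM s)
  have hm : MemLp (fun x : EuclideanSpace ℝ (Fin din) => ‖x‖) 2 ρx :=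
    (memLp_two_iff_integrable_sq (by fun_prop)).2 (hmom 2 (by norm_num))
  have hm₂ : MemLp (fun x : EuclideanSpace ℝ (Fin din) => ‖x‖ ^ 2) 2 ρx :=
    (memLp_two_iff_integrable_sq (by fun_prop)).2 (by simpa only [← pow_mul] using hmom 4 le_rfl)
  set G := ridgeLp σ hσ hm
  set G' := fun θ => innerLp
    (ridgeGradLp (deriv σ) hσ'.continuous (fun _ => norm_deriv_le_of_lipschitz hσ) hm θ)
  have hG : ∀ θ, HasFDerivAt G (G' θ) θ := hasFDerivAt_ridgeLp hσd hσ hσ' hm hm₂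
  have hGK : LipschitzWith _ G := lipschitzWith_ridgeLp hσ hm
  have hG'L : LipschitzWith _ G' := innerLp.lipschitz.comp (lipschitzWith_ridgeGradLp
    hσ'.continuous (fun _ => norm_deriv_le_of_lipschitz hσ) hm hσ' hm₂)
  have hΦG : Φ = fun u => smulRightLp u.1 (G u.2) := funext fun u => Lp.ext <| by
    filter_upwards [hΦ u.1 u.2, smulRightLp_coeFn u.1 (G u.2), ridgeLp_coeFn hσ hm u.2]
      with x hΦx hB hGx
    rw [hΦx, hB, hGx]
  subst hΦG
  refine ⟨⟨fun u => (hasFDerivAt_apply_comp_snd _ (hG u.2)).differentiableAt,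
    exists_norm_fderiv_apply_comp_snd_le_mul _ hG hGK,
    exists_norm_fderiv_apply_comp_snd_sub_le_mul _ hG hGK hG'L⟩, ?_⟩
  rintro ⟨Mb, hMb⟩ φm hφm
  have hφG : φm = fun θ => smulRightLp.flip (G θ) := funext fun θ => ContinuousLinearMap.ext
    fun w => Lp.ext <| by
      filter_upwards [hφm θ w, smulRightLp_coeFn w (G θ), ridgeLp_coeFn hσ hm θ]
        with x hφx hB hGx
      rw [hφx, ContinuousLinearMap.flip_apply, hB, hGx]
  subst hφG
  exact ⟨⟨_, fun θ => (ContinuousLinearMap.le_opNorm _ _).trans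
      (mul_le_mul_of_nonneg_left (norm_ridgeLp_le hσ hm hMb θ) (norm_nonneg _))⟩,
    differentiable_and_fderiv_bounded_lipschitz_comp _ hG hGK hG'L⟩
end

section
/- Let σ(s) = 1/(1+e^{−s}) be the sigmoid function and assume that the probability measure ρ_x on ℝ^{d_in} has a bounded continuous density with respect to the Lebesgue measure. For r ≥ 0 and θ ∈ ℝ^{d_in}, let φ_r(θ) ∈ L²(ρ_x) be the function x ↦ σ(r⟨θ,x⟩), and let φ_∞(θ) ∈ L²(ρ_x) be the indicator function x ↦ 1_{{⟨θ,x⟩ ≥ 0}}. Then φ_r converges to φ_∞ uniformly on the unit sphere S^{d_in−1}: lim_{r→+∞} sup_{θ ∈ S^{d_in−1}} ‖φ_r(θ) − φ_∞(θ)‖_{L²(ρ_x)} = 0. -/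
/-!
For fixed `θ ≠ 0` the integrand `(σ(r⟨θ,x⟩) - 1_{⟨θ,x⟩ ≥ 0})²` is bounded by `1`, decreases in `r`,
and tends to `0` off the hyperplane `⟨θ,x⟩ = 0`, which is `ρ_x`-null since `ρ_x` has a density.
Dominated convergence then shows that the squared `L²` error tends to `0` for each `θ` and is
continuous in `θ`, and Dini's theorem on the compact sphere makes the monotone convergence uniform.
-/

open MeasureTheory Filter Set Real
open scoped RealInnerProductSpace ENNReal NNReal Topology

noncomputable def sigmoidStepError (r s : ℝ) : ℝ :=
  (sigmoid (r * s) - if 0 ≤ s then 1 else 0) ^ 2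

lemma norm_sigmoidStepError_le_one (r s : ℝ) : ‖sigmoidStepError r s‖ ≤ 1 := by
  have h₀ := sigmoid_pos (r * s)
  have h₁ := sigmoid_lt_one (r * s)
  rw [sigmoidStepError, Real.norm_of_nonneg (sq_nonneg _), sq_le_one_iff_abs_le_one, abs_le]
  split_ifs <;> constructor <;> linarith

lemma measurable_sigmoidStepError (r : ℝ) : Measurable (sigmoidStepError r) :=
  ((continuous_sigmoid.comp (continuous_const_mul r)).measurable.sub
    (Measurable.ite measurableSet_Ici measurable_const measurable_const)).pow_const 2

lemma antitone_sigmoidStepError (s : ℝ) : Antitone (sigmoidStepError · s) := by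
  intro r r' hr
  simp only [sigmoidStepError]
  rcases le_or_gt 0 s with hs | hs
  · have := sigmoid_le (mul_le_mul_of_nonneg_right hr hs)
    have := sigmoid_lt_one (r' * s)
    rw [if_pos hs]
    nlinarith
  · have := sigmoid_le (mul_le_mul_of_nonpos_right hr hs.le)
    have := sigmoid_pos (r' * s)
    rw [if_neg hs.not_ge]
    nlinarith

lemma tendsto_sigmoidStepError {s : ℝ} (hs : s ≠ 0) :
    Tendsto (sigmoidStepError · s) atTop (𝓝 0) := by
  rcases hs.lt_or_gt with hs | hs
  · have := tendsto_sigmoid_atBot.comp (tendsto_id.atTop_mul_const_of_neg hs)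
    simpa [sigmoidStepError, hs.not_ge] using (this.sub_const 0).pow 2
  · have := tendsto_sigmoid_atTop.comp (tendsto_id.atTop_mul_const hs)
    simpa [sigmoidStepError, hs.le] using (this.sub_const 1).pow 2

lemma continuousAt_sigmoidStepError (r : ℝ) {s : ℝ} (hs : s ≠ 0) :
    ContinuousAt (sigmoidStepError r) s := by
  have hstep : ContinuousAt (fun t : ℝ => if 0 ≤ t then (1 : ℝ) else 0) s := by
    rcases hs.lt_or_gt with hs | hs
    · exact (continuousAt_const (y := (0 : ℝ))).congr <|
        (eventually_lt_nhds hs).mono fun t ht => by simp [ht.not_ge]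
    · exact (continuousAt_const (y := (1 : ℝ))).congr <|
        (eventually_gt_nhds hs).mono fun t ht => by simp [ht.le]
  exact ((continuous_sigmoid.comp (continuous_const_mul r)).continuousAt.sub hstep).pow 2

lemma ae_inner_ne_zero_of_absolutelyContinuous {E : Type*} [NormedAddCommGroup E]
    [InnerProductSpace ℝ E] [FiniteDimensional ℝ E] [MeasurableSpace E] [BorelSpace E]
    {μ ν : Measure E} [ν.IsAddHaarMeasure] (hμ : μ ≪ ν) {θ : E} (hθ : θ ≠ 0) :
    ∀ᵐ x ∂μ, ⟪θ, x⟫ ≠ 0 := by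
  have hne : (ℝ ∙ θ)ᗮ ≠ ⊤ := fun h => hθ <| inner_self_eq_zero.1 <|
    Submodule.mem_orthogonal_singleton_iff_inner_right.1 (h ▸ Submodule.mem_top)
  rw [ae_iff]
  refine hμ ?_
  convert Measure.addHaar_submodule ν _ hne using 2
  ext x
  simp [Submodule.mem_orthogonal_singleton_iff_inner_right]

section Integral

variable {E : Type*} [NormedAddCommGroup E] [InnerProductSpace ℝ E] [MeasurableSpace E]
  [BorelSpace E] (μ : Measure E) [IsFiniteMeasure μ]

noncomputable def integralSigmoidStepError (r : ℝ) (θ : E) : ℝ :=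
  ∫ x, sigmoidStepError r ⟪θ, x⟫ ∂μ

lemma integrable_sigmoidStepError_inner (r : ℝ) (θ : E) :
    Integrable (fun x => sigmoidStepError r ⟪θ, x⟫) μ :=
  (integrable_const (1 : ℝ)).mono'
    ((measurable_sigmoidStepError r).comp
      (continuous_const.inner continuous_id).measurable).aestronglyMeasurable
    (ae_of_all _ fun _ => norm_sigmoidStepError_le_one _ _)

lemma antitone_integralSigmoidStepError (θ : E) : Antitone (integralSigmoidStepError μ · θ) :=
  fun _ _ hr => integral_mono (integrable_sigmoidStepError_inner μ _ θ)
    (integrable_sigmoidStepError_inner μ _ θ) fun _ => antitone_sigmoidStepError _ hr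

variable {μ}

lemma tendsto_integralSigmoidStepError {θ : E} (hθ : ∀ᵐ x ∂μ, ⟪θ, x⟫ ≠ 0) :
    Tendsto (integralSigmoidStepError μ · θ) atTop (𝓝 0) := by
  simpa [integralSigmoidStepError] using tendsto_integral_filter_of_dominated_convergence
    (fun _ => (1 : ℝ))
    (Eventually.of_forall fun r => (integrable_sigmoidStepError_inner μ r θ).aestronglyMeasurable)
    (Eventually.of_forall fun _ => ae_of_all _ fun _ => norm_sigmoidStepError_le_one _ _)
    (integrable_const 1) (hθ.mono fun _ hx => tendsto_sigmoidStepError hx)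

lemma continuousAt_integralSigmoidStepError (r : ℝ) {θ : E} (hθ : ∀ᵐ x ∂μ, ⟪θ, x⟫ ≠ 0) :
    ContinuousAt (integralSigmoidStepError μ r) θ :=
  continuousAt_of_dominated (bound := fun _ => (1 : ℝ))
    (Eventually.of_forall fun θ' => (integrable_sigmoidStepError_inner μ r θ').aestronglyMeasurable)
    (Eventually.of_forall fun _ => ae_of_all _ fun _ => norm_sigmoidStepError_le_one _ _)
    (integrable_const 1)
    (hθ.mono fun x hx => (continuousAt_sigmoidStepError r hx).comp
      (f := fun θ' : E => ⟪θ', x⟫) (continuous_id.inner continuous_const).continuousAt)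

theorem tendstoUniformlyOn_integralSigmoidStepError {K : Set E} (hK : IsCompact K)
    (hμ : ∀ θ ∈ K, ∀ᵐ x ∂μ, ⟪θ, x⟫ ≠ 0) :
    TendstoUniformlyOn (integralSigmoidStepError μ) 0 atTop K :=
  Antitone.tendstoUniformlyOn_of_forall_tendsto hK
    (fun r θ hθ => (continuousAt_integralSigmoidStepError r (hμ θ hθ)).continuousWithinAt)
    (fun θ _ => antitone_integralSigmoidStepError μ θ) continuousOn_const
    (fun θ hθ => tendsto_integralSigmoidStepError (hμ θ hθ))

end Integral

theorem stmt_11_general {din : ℕ} (ρx : Measure (EuclideanSpace ℝ (Fin din))) [IsProbabilityMeasure ρx]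
    (ρd : EuclideanSpace ℝ (Fin din) → ℝ)
    (hρ : ρx = volume.withDensity fun x => ENNReal.ofReal (ρd x)) :
    ∀ ε > (0 : ℝ), ∃ r₀ : ℝ, ∀ r ≥ r₀, ∀ θ : EuclideanSpace ℝ (Fin din), ‖θ‖ = 1 →
      Real.sqrt (∫ x, (1 / (1 + Real.exp (-(r * ⟪θ, x⟫))) -
        (if 0 ≤ ⟪θ, x⟫ then (1 : ℝ) else 0)) ^ 2 ∂ρx) ≤ ε := by
  have hnull (θ) (hθ : θ ∈ Metric.sphere 0 1) : ∀ᵐ x ∂ρx, ⟪θ, x⟫ ≠ 0 :=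
    ae_inner_ne_zero_of_absolutelyContinuous (ν := volume)
      (hρ ▸ withDensity_absolutelyContinuous _ _) (ne_zero_of_mem_unit_sphere ⟨θ, hθ⟩)
  have hunif := tendstoUniformlyOn_integralSigmoidStepError (isCompact_sphere 0 1) hnull
  intro ε hε
  obtain ⟨r₀, hr₀⟩ :=
    eventually_atTop.1 (Metric.tendstoUniformlyOn_iff.1 hunif (ε ^ 2) (by positivity))
  refine ⟨r₀, fun r hr θ hθ => ?_⟩
  have hsmall := hr₀ r hr θ (by simpa using hθ)
  rw [Pi.zero_apply, dist_zero_left, Real.norm_eq_abs] at hsmall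
  simp only [one_div, ← sigmoid_def]
  exact (Real.sqrt_le_left hε.le).2 ((le_abs_self _).trans hsmall.le)

/-- For the sigmoid `σ(s) = 1/(1+e^{−s})` and a probability measure `ρ_x`
with a bounded continuous density w.r.t. Lebesgue, the maps `φ_r(θ) = σ(r⟨θ,·⟩)` converge in
`L²(ρ_x)`, uniformly over the unit sphere, to the indicator `φ_∞(θ) = 1_{⟨θ,·⟩ ≥ 0}`. -/
theorem stmt_11 {din : ℕ} (ρx : Measure (EuclideanSpace ℝ (Fin din))) [IsProbabilityMeasure ρx]
    (ρd : EuclideanSpace ℝ (Fin din) → ℝ) (hcont : Continuous ρd)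
    (hnn : ∀ x, 0 ≤ ρd x) (hbdd : ∃ M, ∀ x, ρd x ≤ M)
    (hρ : ρx = volume.withDensity fun x => ENNReal.ofReal (ρd x)) :
    ∀ ε > (0 : ℝ), ∃ r₀ : ℝ, ∀ r ≥ r₀, ∀ θ : EuclideanSpace ℝ (Fin din), ‖θ‖ = 1 →
      Real.sqrt (∫ x, (1 / (1 + Real.exp (-(r * ⟪θ, x⟫))) -
        (if 0 ≤ ⟪θ, x⟫ then (1 : ℝ) else 0)) ^ 2 ∂ρx) ≤ ε :=
  stmt_11_general ρx ρd hρ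
end

section
/- Let ρ_X be a probability measure on ℝ^{n×d} with a bounded continuous density with respect to the Lebesgue measure and with ∫_{ℝ^{n×d}} max_{1≤i≤n} |x_i|² dρ_X(X) < +∞. Define ψ(A)(X) = Σ_{i=1}^n [e^{⟨Ax_n,x_i⟩}/Σ_{j=1}^n e^{⟨Ax_n,x_j⟩}] x_i (softmax attention) and the hardmax attention ψ_∞(A)(X) = (1/#Σ(XAx_n)) Σ_{i ∈ Σ(XAx_n)} x_i, where for z ∈ ℝⁿ, Σ(z) = {i : z_i = max_j z_j}. Then lim_{r→+∞} sup_{A ∈ S^{d²−1}} ‖ψ(rA) − ψ_∞(A)‖_{L²(ρ_X;ℝ^d)} = 0, where S^{d²−1} denotes the set of d×d matrices of unit Frobenius norm. -/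
/-!
For `A ≠ 0` the scores `⟨A xₙ, xᵢ⟩` are Lebesgue-a.e. pairwise distinct: `A xₙ = 0` confines `xₙ`
to a proper subspace, and otherwise a tie between `xᵢ` and `xⱼ` confines whichever of them is not
the query token to an affine hyperplane once all other tokens are fixed. At such a context the
maximal score is strict and stays strict for matrices near `A`, so softmax attention with
parameter `r • B` tends to hardmax attention with parameter `B` as `r → ∞` and `B → A`. Both maps
are bounded by `‖X‖`, so dominated convergence (with the second moment) gives convergence of the
`L²` error along `atTop ×ˢ 𝓝 A`, and compactness of the unit sphere makes it uniform in `A`.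
-/

open MeasureTheory Filter Set
open scoped RealInnerProductSpace ENNReal NNReal Topology

/-- `⟨A x, y⟩` where the matrix `A ∈ ℝ^{d×d}` is encoded as a Euclidean vector indexed by
`Fin d × Fin d` (so that its Euclidean norm is the Frobenius norm). -/
noncomputable def matBilin {d : ℕ} (A : EuclideanSpace ℝ (Fin d × Fin d))
    (x y : EuclideanSpace ℝ (Fin d)) : ℝ :=
  ∑ k, (∑ j, A (k, j) * x j) * y k

/-- The single-head softmax attention map. -/
noncomputable def attnMap {n d : ℕ} (i0 : Fin n) (A : EuclideanSpace ℝ (Fin d × Fin d))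
    (X : Fin n → EuclideanSpace ℝ (Fin d)) : EuclideanSpace ℝ (Fin d) :=
  ∑ i, (Real.exp (matBilin A (X i0) (X i)) /
      ∑ j, Real.exp (matBilin A (X i0) (X j))) • X i

open Classical in
/-- The hardmax attention map: the average of the tokens achieving the maximal score. -/
noncomputable def hardAttnMap {n d : ℕ} (i0 : Fin n) (A : EuclideanSpace ℝ (Fin d × Fin d))
    (X : Fin n → EuclideanSpace ℝ (Fin d)) : EuclideanSpace ℝ (Fin d) :=
  (((Finset.univ.filter fun i : Fin n =>
      ∀ j, matBilin A (X i0) (X j) ≤ matBilin A (X i0) (X i)).card : ℝ))⁻¹ •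
    ∑ i ∈ Finset.univ.filter fun i : Fin n =>
        ∀ j, matBilin A (X i0) (X j) ≤ matBilin A (X i0) (X i), X i

lemma norm_sum_smul_le_of_sum_le_one {ι E : Type*} [NormedAddCommGroup E] [NormedSpace ℝ E]
    (s : Finset ι) {w : ι → ℝ} {z : ι → E} {R : ℝ} (hw : ∀ i ∈ s, 0 ≤ w i)
    (hw₁ : ∑ i ∈ s, w i ≤ 1) (hR : 0 ≤ R) (hz : ∀ i ∈ s, ‖z i‖ ≤ R) :
    ‖∑ i ∈ s, w i • z i‖ ≤ R :=
  calc ‖∑ i ∈ s, w i • z i‖ ≤ ∑ i ∈ s, w i * R := by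
        refine (norm_sum_le _ _).trans (Finset.sum_le_sum fun i hi => ?_)
        rw [norm_smul, Real.norm_of_nonneg (hw i hi)]
        exact mul_le_mul_of_nonneg_left (hz i hi) (hw i hi)
    _ = (∑ i ∈ s, w i) * R := Finset.sum_mul _ _ _ |>.symm
    _ ≤ R := mul_le_of_le_one_left hR hw₁

section Softmax

variable {ι : Type*} [Fintype ι]

noncomputable def softmax (z : ι → ℝ) (i : ι) : ℝ :=
  Real.exp (z i) / ∑ j, Real.exp (z j)

lemma softmax_nonneg (z : ι → ℝ) (i : ι) : 0 ≤ softmax z i := by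
  unfold softmax
  positivity

lemma sum_exp_pos [Nonempty ι] (z : ι → ℝ) : 0 < ∑ j, Real.exp (z j) :=
  Finset.sum_pos (fun j _ => Real.exp_pos (z j)) Finset.univ_nonempty

lemma sum_softmax [Nonempty ι] (z : ι → ℝ) : ∑ i, softmax z i = 1 := by
  simp only [softmax, ← Finset.sum_div]
  exact div_self (sum_exp_pos z).ne'

lemma continuous_softmax [Nonempty ι] (i : ι) : Continuous fun z : ι → ℝ => softmax z i := by
  unfold softmax
  exact Continuous.div (by fun_prop) (by fun_prop) fun z => (sum_exp_pos z).ne'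

lemma softmax_sub_const (z : ι → ℝ) (c : ℝ) : softmax (fun j => z j - c) = softmax z := by
  funext i
  simp only [softmax, Real.exp_sub, ← Finset.sum_div]
  exact div_div_div_cancel_right₀ (Real.exp_pos c).ne' _ _

lemma tendsto_softmax_smul [DecidableEq ι] {α : Type*} {l : Filter α} {r : α → ℝ}
    {s : α → ι → ℝ} {c : ι → ℝ} {i₀ : ι} (hr : Tendsto r l atTop)
    (hs : ∀ i, Tendsto (fun a => s a i) l (𝓝 (c i))) (hmax : ∀ j ≠ i₀, c j < c i₀) :
    Tendsto (fun a => softmax (r a • s a)) l (𝓝 (Pi.single i₀ 1)) := by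
  have hshift : ∀ a, softmax (r a • s a) = softmax (fun j => r a * (s a j - s a i₀)) := by
    intro a
    rw [← softmax_sub_const (r a • s a) (r a * s a i₀)]
    simp only [Pi.smul_apply, smul_eq_mul, mul_sub]
  have hexp : ∀ j, Tendsto (fun a => Real.exp (r a * (s a j - s a i₀))) l
      (𝓝 ((Pi.single i₀ 1 : ι → ℝ) j)) := by
    intro j
    rcases eq_or_ne j i₀ with rfl | hj
    · simpa using tendsto_const_nhds
    · rw [Pi.single_eq_of_ne hj]
      exact Real.tendsto_exp_atBot.comp
        (hr.atTop_mul_neg (sub_neg.2 (hmax j hj)) ((hs j).sub (hs i₀)))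
  have hsum : Tendsto (fun a => ∑ j, Real.exp (r a * (s a j - s a i₀))) l (𝓝 1) := by
    simpa using tendsto_finsetSum Finset.univ fun j _ => hexp j
  simp only [hshift]
  refine tendsto_pi_nhds.2 fun i => ?_
  unfold softmax
  simpa [Pi.div_def] using (hexp i).div hsum one_ne_zero

end Softmax

lemma MeasureTheory.Measure.addHaar_preimage_singleton_linearMap {E F : Type*}
    [NormedAddCommGroup E] [NormedSpace ℝ E] [MeasurableSpace E] [BorelSpace E]
    [FiniteDimensional ℝ E] [AddCommGroup F] [Module ℝ F] (μ : Measure E) [μ.IsAddHaarMeasure]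
    {f : E →ₗ[ℝ] F} (hf : f ≠ 0) (c : F) : μ (f ⁻¹' {c}) = 0 := by
  rcases (f ⁻¹' {c}).eq_empty_or_nonempty with h | ⟨x, hx⟩
  · rw [h, measure_empty]
  have htrans : f ⁻¹' {c} = (· + -x) ⁻¹' (LinearMap.ker f : Set E) := by
    rw [mem_preimage, mem_singleton_iff] at hx
    ext y
    simp [← hx, ← sub_eq_add_neg, sub_eq_zero]
  rw [htrans, measure_preimage_add_right]
  exact Measure.addHaar_submodule μ _ (LinearMap.ker_eq_top.not.2 hf)

lemma MeasureTheory.Measure.pi_null_of_update_null {ι : Type*} [Fintype ι] [DecidableEq ι]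
    {X : ι → Type*} [∀ i, MeasurableSpace (X i)] (μ : ∀ i, Measure (X i)) [∀ i, SigmaFinite (μ i)]
    {S : Set (∀ i, X i)} (hS : MeasurableSet S) (m : ι)
    (h : ∀ x, μ m (Function.update x m ⁻¹' S) = 0) : Measure.pi μ S = 0 := by
  have hslice : ∫⋯∫⁻_{m}, S.indicator 1 ∂μ = ∫⋯∫⁻_{m}, 0 ∂μ := by
    ext x
    simp only [lmarginal_singleton, Pi.zero_apply, lintegral_zero]
    rw [← h x, ← lintegral_indicator_one (hS.preimage (measurable_update x))]
    rfl
  rw [← lintegral_indicator_one hS, ← lintegral_zero]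
  exact lintegral_eq_of_lmarginal_eq {m} (measurable_one.indicator hS) measurable_const hslice

section Attention

variable {n d : ℕ}

noncomputable def attnScore (i0 : Fin n) (A : EuclideanSpace ℝ (Fin d × Fin d))
    (X : Fin n → EuclideanSpace ℝ (Fin d)) (i : Fin n) : ℝ :=
  matBilin A (X i0) (X i)

noncomputable def matVec (A : EuclideanSpace ℝ (Fin d × Fin d)) :
    EuclideanSpace ℝ (Fin d) →ₗ[ℝ] EuclideanSpace ℝ (Fin d) :=
  Matrix.toEuclideanLin (Matrix.of fun k j => A (k, j))

lemma matBilin_eq_inner (A : EuclideanSpace ℝ (Fin d × Fin d)) (v w : EuclideanSpace ℝ (Fin d)) :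
    matBilin A v w = ⟪matVec A v, w⟫ := by
  simp [matBilin, matVec, PiLp.inner_apply, Matrix.mulVec, dotProduct, mul_comm]

lemma matVec_ne_zero {A : EuclideanSpace ℝ (Fin d × Fin d)} (hA : A ≠ 0) : matVec A ≠ 0 := by
  refine (LinearEquiv.map_ne_zero_iff _).2 fun h => hA ?_
  ext ⟨k, j⟩
  simpa using congrFun₂ h k j

lemma continuous_attnScore (i0 : Fin n) (A : EuclideanSpace ℝ (Fin d × Fin d)) (i : Fin n) :
    Continuous fun X => attnScore i0 A X i := by
  unfold attnScore matBilin
  fun_prop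

lemma continuous_attnScore_matrix (i0 : Fin n) (X : Fin n → EuclideanSpace ℝ (Fin d)) (i : Fin n) :
    Continuous fun A => attnScore i0 A X i := by
  unfold attnScore matBilin
  fun_prop

lemma volume_attnScore_tie_eq_zero (i0 : Fin n) (A : EuclideanSpace ℝ (Fin d × Fin d))
    {m o : Fin n} (hm : m ≠ i0) (ho : o ≠ m) :
    volume {X : Fin n → EuclideanSpace ℝ (Fin d) |
      matVec A (X i0) ≠ 0 ∧ attnScore i0 A X m = attnScore i0 A X o} = 0 := by
  have hmeas : MeasurableSet {X : Fin n → EuclideanSpace ℝ (Fin d) |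
      matVec A (X i0) ≠ 0 ∧ attnScore i0 A X m = attnScore i0 A X o} := by
    refine MeasurableSet.inter ?_ (measurableSet_eq_fun ?_ ?_)
    · exact (isOpen_ne_fun ((matVec A).continuous_of_finiteDimensional.comp
        (continuous_apply i0)) continuous_const).measurableSet
    all_goals exact (continuous_attnScore i0 A _).measurable
  rw [volume_pi]
  refine Measure.pi_null_of_update_null _ hmeas m fun x => ?_
  by_cases h0 : matVec A (x i0) = 0
  · convert measure_empty (μ := volume)
    ext y
    simp [h0, Function.update_of_ne hm.symm]
  refine measure_mono_null (fun y hy => ?_) (Measure.addHaar_preimage_singleton_linearMap volume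
    (f := innerₗ _ (matVec A (x i0))) ?_ (attnScore i0 A x o))
  · simpa [attnScore, matBilin_eq_inner, Function.update_of_ne hm.symm,
      Function.update_of_ne ho] using hy.2
  · intro h
    exact h0 (inner_self_eq_zero.1 (LinearMap.congr_fun h (matVec A (x i0))))

lemma volume_not_injective_attnScore (i0 : Fin n) {A : EuclideanSpace ℝ (Fin d × Fin d)}
    (hA : A ≠ 0) :
    volume {X : Fin n → EuclideanSpace ℝ (Fin d) |
      ¬ Function.Injective (attnScore i0 A X)} = 0 := by
  have hsub : {X : Fin n → EuclideanSpace ℝ (Fin d) | ¬ Function.Injective (attnScore i0 A X)} ⊆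
      (fun X => X i0) ⁻¹' (LinearMap.ker (matVec A) : Set (EuclideanSpace ℝ (Fin d))) ∪
        ⋃ (m) (_ : m ≠ i0) (o) (_ : o ≠ m),
          {X | matVec A (X i0) ≠ 0 ∧ attnScore i0 A X m = attnScore i0 A X o} := by
    intro X hX
    obtain ⟨i, j, hij, hne⟩ : ∃ i j, attnScore i0 A X i = attnScore i0 A X j ∧ i ≠ j := by
      simpa [Function.Injective] using hX
    by_cases h0 : matVec A (X i0) = 0
    · exact Or.inl h0
    right
    rcases eq_or_ne i i0 with rfl | hi
    · exact mem_iUnion₂.2 ⟨j, hne.symm, mem_iUnion₂.2 ⟨i, hne, h0, hij.symm⟩⟩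
    · exact mem_iUnion₂.2 ⟨i, hi, mem_iUnion₂.2 ⟨j, hne.symm, h0, hij⟩⟩
  refine measure_mono_null hsub (measure_union_null ?_ ?_)
  · rw [volume_pi]
    exact Measure.pi_eval_preimage_null _
      (Measure.addHaar_submodule volume _ (LinearMap.ker_eq_top.not.2 (matVec_ne_zero hA)))
  · exact measure_iUnion_null fun m => measure_iUnion_null fun hm =>
      measure_iUnion_null fun o => measure_iUnion_null fun ho =>
        volume_attnScore_tie_eq_zero i0 A hm ho

lemma attnScore_smul (i0 : Fin n) (r : ℝ) (A : EuclideanSpace ℝ (Fin d × Fin d))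
    (X : Fin n → EuclideanSpace ℝ (Fin d)) : attnScore i0 (r • A) X = r • attnScore i0 A X := by
  funext i
  simp [attnScore, matBilin, Finset.mul_sum, Finset.sum_mul, mul_assoc]

lemma attnMap_eq_sum_softmax (i0 : Fin n) (A : EuclideanSpace ℝ (Fin d × Fin d))
    (X : Fin n → EuclideanSpace ℝ (Fin d)) :
    attnMap i0 A X = ∑ i, softmax (attnScore i0 A X) i • X i :=
  rfl

open Classical in
noncomputable def attnArgmax (i0 : Fin n) (A : EuclideanSpace ℝ (Fin d × Fin d))
    (X : Fin n → EuclideanSpace ℝ (Fin d)) : Finset (Fin n) :=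
  Finset.univ.filter fun i => ∀ j, attnScore i0 A X j ≤ attnScore i0 A X i

lemma hardAttnMap_eq_attnArgmax (i0 : Fin n) (A : EuclideanSpace ℝ (Fin d × Fin d))
    (X : Fin n → EuclideanSpace ℝ (Fin d)) :
    hardAttnMap i0 A X = ((attnArgmax i0 A X).card : ℝ)⁻¹ • ∑ i ∈ attnArgmax i0 A X, X i :=
  rfl

lemma hardAttnMap_eq_of_forall_lt (i0 : Fin n) (A : EuclideanSpace ℝ (Fin d × Fin d))
    (X : Fin n → EuclideanSpace ℝ (Fin d)) {i₁ : Fin n}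
    (h : ∀ j ≠ i₁, attnScore i0 A X j < attnScore i0 A X i₁) : hardAttnMap i0 A X = X i₁ := by
  have hargmax : attnArgmax i0 A X = {i₁} := by
    ext i
    simp only [attnArgmax, Finset.mem_filter, Finset.mem_univ, true_and, Finset.mem_singleton]
    refine ⟨fun hi => by_contra fun hne => (h i hne).not_ge (hi i₁), ?_⟩
    rintro rfl j
    rcases eq_or_ne j i with rfl | hj
    exacts [le_rfl, (h j hj).le]
  simp [hardAttnMap_eq_attnArgmax, hargmax]

lemma measurable_hardAttnMap (i0 : Fin n) (A : EuclideanSpace ℝ (Fin d × Fin d)) :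
    Measurable (hardAttnMap i0 A) := by
  set M : Fin n → Set (Fin n → EuclideanSpace ℝ (Fin d)) :=
    fun i => {X | i ∈ attnArgmax i0 A X}
  have hM : ∀ i, MeasurableSet (M i) := by
    intro i
    simp only [M, attnArgmax, Finset.mem_filter, Finset.mem_univ, true_and, ofPred_forall]
    exact MeasurableSet.iInter fun j => measurableSet_le (continuous_attnScore i0 A j).measurable
      (continuous_attnScore i0 A i).measurable
  have hsum : hardAttnMap i0 A = fun X =>
      (∑ i, (M i).indicator (fun _ => (1 : ℝ)) X)⁻¹ • ∑ i, (M i).indicator (fun X => X i) X := by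
    funext X
    simp [hardAttnMap_eq_attnArgmax, M, indicator_apply, Finset.sum_ite_mem]
  rw [hsum]
  fun_prop (disch := exact hM _)

lemma norm_attnMap_le (i0 : Fin n) (A : EuclideanSpace ℝ (Fin d × Fin d))
    (X : Fin n → EuclideanSpace ℝ (Fin d)) : ‖attnMap i0 A X‖ ≤ ‖X‖ := by
  have : Nonempty (Fin n) := ⟨i0⟩
  rw [attnMap_eq_sum_softmax]
  exact norm_sum_smul_le_of_sum_le_one _ (fun i _ => softmax_nonneg _ i) (sum_softmax _).le
    (norm_nonneg X) fun i _ => norm_le_pi_norm X i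

lemma norm_hardAttnMap_le (i0 : Fin n) (A : EuclideanSpace ℝ (Fin d × Fin d))
    (X : Fin n → EuclideanSpace ℝ (Fin d)) : ‖hardAttnMap i0 A X‖ ≤ ‖X‖ := by
  rw [hardAttnMap_eq_attnArgmax, Finset.smul_sum]
  refine norm_sum_smul_le_of_sum_le_one _ (fun _ _ => by positivity) ?_ (norm_nonneg X)
    fun i _ => norm_le_pi_norm X i
  rw [Finset.sum_const, nsmul_eq_mul]
  exact mul_inv_le_one

lemma continuous_attnMap (i0 : Fin n) (A : EuclideanSpace ℝ (Fin d × Fin d)) :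
    Continuous (attnMap i0 A) := by
  have : Nonempty (Fin n) := ⟨i0⟩
  have hscore : Continuous fun X => attnScore i0 A X := continuous_pi (continuous_attnScore i0 A)
  exact continuous_finsetSum _ fun i _ =>
    ((continuous_softmax i).comp hscore).smul (continuous_apply i)

lemma norm_attnMap_sub_hardAttnMap_le (i0 : Fin n) (A B : EuclideanSpace ℝ (Fin d × Fin d))
    (X : Fin n → EuclideanSpace ℝ (Fin d)) : ‖attnMap i0 A X - hardAttnMap i0 B X‖ ≤ 2 * ‖X‖ :=
  calc ‖attnMap i0 A X - hardAttnMap i0 B X‖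
      ≤ ‖attnMap i0 A X‖ + ‖hardAttnMap i0 B X‖ := norm_sub_le _ _
    _ ≤ ‖X‖ + ‖X‖ := add_le_add (norm_attnMap_le i0 A X) (norm_hardAttnMap_le i0 B X)
    _ = 2 * ‖X‖ := by ring

lemma tendsto_attnMap_sub_hardAttnMap (i0 : Fin n) {A : EuclideanSpace ℝ (Fin d × Fin d)}
    {X : Fin n → EuclideanSpace ℝ (Fin d)} (hX : Function.Injective (attnScore i0 A X)) :
    Tendsto (fun p : ℝ × EuclideanSpace ℝ (Fin d × Fin d) =>
      attnMap i0 (p.1 • p.2) X - hardAttnMap i0 p.2 X) (atTop ×ˢ 𝓝 A) (𝓝 0) := by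
  obtain ⟨i₁, -, hi₁⟩ :=
    Finset.exists_max_image Finset.univ (attnScore i0 A X) ⟨i0, Finset.mem_univ _⟩
  have hlt : ∀ j ≠ i₁, attnScore i0 A X j < attnScore i0 A X i₁ :=
    fun j hj => (hi₁ j (Finset.mem_univ _)).lt_of_ne (hX.ne hj)
  have hscore : ∀ i, Tendsto (fun p : ℝ × EuclideanSpace ℝ (Fin d × Fin d) =>
      attnScore i0 p.2 X i) (atTop ×ˢ 𝓝 A) (𝓝 (attnScore i0 A X i)) :=
    fun i => ((continuous_attnScore_matrix i0 X i).tendsto A).comp tendsto_snd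
  have hsoft : Tendsto (fun p : ℝ × EuclideanSpace ℝ (Fin d × Fin d) =>
      attnMap i0 (p.1 • p.2) X) (atTop ×ˢ 𝓝 A) (𝓝 (X i₁)) := by
    have hw := tendsto_softmax_smul tendsto_fst hscore hlt
    simp only [attnMap_eq_sum_softmax, attnScore_smul]
    simpa using tendsto_finsetSum Finset.univ fun i _ =>
      (((continuous_apply i).tendsto _).comp hw).smul_const (X i)
  have hhard : ∀ᶠ p : ℝ × EuclideanSpace ℝ (Fin d × Fin d) in atTop ×ˢ 𝓝 A,
      hardAttnMap i0 p.2 X = X i₁ := by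
    have hstrict : ∀ᶠ p : ℝ × EuclideanSpace ℝ (Fin d × Fin d) in atTop ×ˢ 𝓝 A,
        ∀ j ≠ i₁, attnScore i0 p.2 X j < attnScore i0 p.2 X i₁ := by
      refine eventually_all.2 fun j => ?_
      rcases eq_or_ne j i₁ with rfl | hj
      · exact Eventually.of_forall fun _ h => absurd rfl h
      · exact ((hscore j).eventually_lt (hscore i₁) (hlt j hj)).mono fun _ h _ => h
    exact hstrict.mono fun p hp => hardAttnMap_eq_of_forall_lt i0 p.2 X hp
  exact (tendsto_sub_nhds_zero_iff.2 hsoft).congr' (hhard.mono fun p hp => by simp only [hp])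

lemma tendsto_integral_norm_attnMap_sub_hardAttnMap_sq (i0 : Fin n)
    {ρ : Measure (Fin n → EuclideanSpace ℝ (Fin d))} (hρ : ρ ≪ volume)
    (hmom : Integrable (fun X => ‖X‖ ^ 2) ρ) {A : EuclideanSpace ℝ (Fin d × Fin d)}
    (hA : A ≠ 0) :
    Tendsto (fun p : ℝ × EuclideanSpace ℝ (Fin d × Fin d) =>
      ∫ X, ‖attnMap i0 (p.1 • p.2) X - hardAttnMap i0 p.2 X‖ ^ 2 ∂ρ) (atTop ×ˢ 𝓝 A) (𝓝 0) := by
  have hmeas : ∀ p : ℝ × EuclideanSpace ℝ (Fin d × Fin d), AEStronglyMeasurable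
      (fun X => ‖attnMap i0 (p.1 • p.2) X - hardAttnMap i0 p.2 X‖ ^ 2) ρ := fun p =>
    (((continuous_attnMap i0 _).measurable.sub
      (measurable_hardAttnMap i0 _)).norm.pow_const 2).aestronglyMeasurable
  have hbound : ∀ p : ℝ × EuclideanSpace ℝ (Fin d × Fin d), ∀ X,
      ‖‖attnMap i0 (p.1 • p.2) X - hardAttnMap i0 p.2 X‖ ^ 2‖ ≤ 4 * ‖X‖ ^ 2 := by
    intro p X
    rw [norm_pow, norm_norm]
    nlinarith [norm_attnMap_sub_hardAttnMap_le i0 (p.1 • p.2) p.2 X, norm_nonneg X,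
      norm_nonneg (attnMap i0 (p.1 • p.2) X - hardAttnMap i0 p.2 X)]
  have hlim : ∀ᵐ X ∂ρ, Tendsto (fun p : ℝ × EuclideanSpace ℝ (Fin d × Fin d) =>
      ‖attnMap i0 (p.1 • p.2) X - hardAttnMap i0 p.2 X‖ ^ 2) (atTop ×ˢ 𝓝 A) (𝓝 0) := by
    have hinj : ∀ᵐ X ∂ρ, Function.Injective (attnScore i0 A X) :=
      hρ (volume_not_injective_attnScore i0 hA)
    filter_upwards [hinj] with X hX
    simpa using (tendsto_attnMap_sub_hardAttnMap i0 hX).norm.pow 2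
  simpa using tendsto_integral_filter_of_dominated_convergence _ (Eventually.of_forall hmeas)
    (Eventually.of_forall fun p => Eventually.of_forall (hbound p)) (hmom.const_mul 4) hlim

end Attention

theorem stmt_14_general {n d : ℕ} (i0 : Fin n)
    (ρX : Measure (Fin n → EuclideanSpace ℝ (Fin d)))
    (ρdens : (Fin n → EuclideanSpace ℝ (Fin d)) → ℝ)
    (hρ : ρX = volume.withDensity fun X => ENNReal.ofReal (ρdens X))
    (hmom : Integrable (fun X => ‖X‖ ^ 2) ρX) :
    ∀ ε > (0 : ℝ), ∃ r₀ : ℝ, ∀ r ≥ r₀, ∀ A : EuclideanSpace ℝ (Fin d × Fin d), ‖A‖ = 1 →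
      (∫ X, ‖attnMap i0 (r • A) X - hardAttnMap i0 A X‖ ^ 2 ∂ρX) ≤ ε ^ 2 := by
  intro ε hε
  set K := Metric.sphere (0 : EuclideanSpace ℝ (Fin d × Fin d)) 1
  have hac : ρX ≪ volume := hρ ▸ withDensity_absolutelyContinuous _ _
  have hsmall : ∀ᶠ p in atTop ×ˢ 𝓝ˢ K,
      ∫ X, ‖attnMap i0 (p.1 • p.2) X - hardAttnMap i0 p.2 X‖ ^ 2 ∂ρX < ε ^ 2 :=
    (isCompact_sphere 0 1).mem_prod_nhdsSet_of_forall fun A hA =>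
      (tendsto_integral_norm_attnMap_sub_hardAttnMap_sq i0 hac hmom
        (ne_zero_of_mem_sphere one_ne_zero ⟨A, hA⟩)).eventually (gt_mem_nhds (by positivity))
  obtain ⟨r₀, hr₀⟩ := eventually_atTop.1 <| eventually_prod_principal_iff.1 <|
    hsmall.filter_mono (prod_mono le_rfl principal_le_nhdsSet)
  exact ⟨r₀, fun r hr A hA => (hr₀ r hr A (mem_sphere_zero_iff_norm.2 hA)).le⟩

/-- If `ρ_X` has a bounded continuous density w.r.t. Lebesgue and finite
second moments, then softmax attention converges to hardmax attention in `L²(ρ_X; ℝ^d)`,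
uniformly over matrices of unit Frobenius norm:
`lim_{r→∞} sup_{‖A‖=1} ‖ψ(rA) − ψ_∞(A)‖_{L²} = 0`. -/
theorem stmt_14 {n d : ℕ} (hn : 0 < n) (i0 : Fin n) (hi0 : (i0 : ℕ) = n - 1)
    (ρX : Measure (Fin n → EuclideanSpace ℝ (Fin d))) [IsProbabilityMeasure ρX]
    (ρdens : (Fin n → EuclideanSpace ℝ (Fin d)) → ℝ)
    (hcont : Continuous ρdens) (hnn : ∀ X, 0 ≤ ρdens X) (hbdd : ∃ M, ∀ X, ρdens X ≤ M)
    (hρ : ρX = volume.withDensity fun X => ENNReal.ofReal (ρdens X))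
    (hmom : Integrable (fun X => ‖X‖ ^ 2) ρX) :
    ∀ ε > (0 : ℝ), ∃ r₀ : ℝ, ∀ r ≥ r₀, ∀ A : EuclideanSpace ℝ (Fin d × Fin d), ‖A‖ = 1 →
      (∫ X, ‖attnMap i0 (r • A) X - hardAttnMap i0 A X‖ ^ 2 ∂ρX) ≤ ε ^ 2 :=
  stmt_14_general i0 ρX ρdens hρ hmom
end
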